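/- arXiv:1504.05740 — 5 statements merged into one kernel-verified Lean document; each statement's English description precedes it below -/
import Mathlib

section
/- Let R = 0.77. For every α with 0 < α ≤ 0.6442, let x ∈ (0,1) be the unique solution of (x - 1)/ln x = α and let y ∈ (0,1) be the unique solution of (y - 1)/ln y = α/R. Then 1/(2(1 - y)) ≤ 1/(1 - x), equivalently 1 - x ≤ 2(1 - y). (The naive-WOM system has erasure factor no larger than that of the baseline system for α ≤ 0.6442.) -/
set_option maxRecDepth 8000

open Real Set

/-- `f(x) = (x-1)/log x` is strictly increasing on `(0,1)`. -/
lemma aux_f_strictMono : StrictMonoOn (fun x : ℝ => (x - 1) / Real.log x) (Set.Ioo 0 1) := by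
  apply strictMonoOn_of_deriv_pos (convex_Ioo 0 1)
  · intro x hx
    obtain ⟨hx0, hx1⟩ := hx
    have hlog : Real.log x < 0 := Real.log_neg hx0 hx1
    exact ((continuousAt_id.sub continuousAt_const).div
      (Real.continuousAt_log (ne_of_gt hx0)) (ne_of_lt hlog)).continuousWithinAt
  · intro x hx
    rw [interior_Ioo] at hx
    obtain ⟨hx0, hx1⟩ := hx
    have hlog : Real.log x < 0 := Real.log_neg hx0 hx1
    have hlogne : Real.log x ≠ 0 := ne_of_lt hlog
    have hd : HasDerivAt (fun x : ℝ => (x - 1) / Real.log x)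
        ((1 * Real.log x - (x - 1) * x⁻¹) / Real.log x ^ 2) x :=
      ((hasDerivAt_id x).sub_const 1).div (Real.hasDerivAt_log (ne_of_gt hx0)) hlogne
    rw [hd.deriv]
    apply div_pos
    · have hinv1 : (x:ℝ)⁻¹ ≠ 1 := by
        intro h
        have : x = 1 := by
          field_simp at h
          linarith [h]
        linarith
      have h1 : Real.log x⁻¹ < x⁻¹ - 1 :=
        Real.log_lt_sub_one_of_pos (by positivity) hinv1
      rw [Real.log_inv] at h1
      have h2 : (x - 1) * x⁻¹ = 1 - x⁻¹ := by field_simp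
      nlinarith
    · nlinarith [hlog]

/-- Numeric: `-(3075/3221) ≤ log (77/200)`. -/
lemma aux_log_xstar : -(3075/3221 : ℝ) ≤ Real.log (77/200) := by
  have h1 : (1 + 205/6442 + (205/6442)^2/2 : ℝ) ≤ Real.exp (205/6442) :=
    Real.quadratic_le_exp_of_nonneg (by norm_num)
  have h2 : ((1 + 205/6442 + (205/6442)^2/2 : ℝ))^(30:ℕ) ≤ (Real.exp (205/6442))^(30:ℕ) :=
    pow_le_pow_left₀ (by positivity) h1 30
  have h3 : (Real.exp ((205:ℝ)/6442))^(30:ℕ) = Real.exp (3075/3221) := by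
    rw [← Real.exp_nat_mul]; norm_num
  have h4 : (200/77:ℝ) ≤ (1 + 205/6442 + (205/6442)^2/2 : ℝ)^(30:ℕ) := by norm_num
  have h5 : (200/77:ℝ) ≤ Real.exp (3075/3221) := h4.trans (h3 ▸ h2)
  have h6 : Real.log (200/77) ≤ 3075/3221 := (Real.log_le_iff_le_exp (by norm_num)).mpr h5
  have h7 : Real.log (77/200:ℝ) = - Real.log (200/77) := by
    rw [← Real.log_inv]; norm_num
  linarith

/-- Key polynomial inequality: for `0 < x ≤ 77/200`, `x^77 ≤ ((1+x)/2)^200`. -/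
lemma aux_key_poly (x : ℝ) (hx0 : 0 < x) (hx1 : x ≤ 77/200) :
    x^77 ≤ ((1+x)/2)^200 := by
  set r : ℝ := 200*x/77 with hr
  have hr0 : 0 < r := by positivity
  have amgm : r ^ ((77:ℝ)/200) * 1 ^ ((123:ℝ)/200) ≤ 77/200 * r + 123/200 * 1 :=
    Real.geom_mean_le_arith_mean2_weighted (by norm_num) (by norm_num) hr0.le zero_le_one
      (by norm_num)
  rw [Real.one_rpow, mul_one, mul_one] at amgm
  have h2 : (r ^ ((77:ℝ)/200))^(200:ℕ) ≤ (77/200 * r + 123/200)^(200:ℕ) :=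
    pow_le_pow_left₀ (Real.rpow_nonneg hr0.le _) amgm 200
  have h3 : (r ^ ((77:ℝ)/200))^(200:ℕ) = r^(77:ℕ) := by
    rw [← Real.rpow_natCast (r ^ ((77:ℝ)/200)) 200, ← Real.rpow_mul hr0.le]
    norm_num
  rw [h3] at h2
  have e1 : (77/200:ℝ) * r + 123/200 = x + 123/200 := by rw [hr]; ring
  rw [e1] at h2
  have h4 : x + 123/200 ≤ (400/277) * ((1+x)/2) := by linarith
  have h5 : (x + 123/200)^(200:ℕ) ≤ ((400/277) * ((1+x)/2))^(200:ℕ) :=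
    pow_le_pow_left₀ (by positivity) h4 200
  have e2 : r^(77:ℕ) = (200/77:ℝ)^77 * x^77 := by rw [hr, div_pow, mul_pow]; ring
  have hc : (77/200:ℝ)^77 * (400/277:ℝ)^200 ≤ 1 := by norm_num
  calc x^77 = (77/200:ℝ)^77 * ((200/77:ℝ)^77 * x^77) := by
        rw [← mul_assoc, ← mul_pow]; norm_num
    _ ≤ (77/200:ℝ)^77 * (((400/277) * ((1+x)/2))^200) := by
        apply mul_le_mul_of_nonneg_left _ (by positivity)
        exact (e2 ▸ h2).trans h5
    _ = ((77/200:ℝ)^77 * (400/277)^200) * ((1+x)/2)^200 := by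
        rw [mul_pow]; ring
    _ ≤ 1 * ((1+x)/2)^200 := mul_le_mul_of_nonneg_right hc (by positivity)
    _ = ((1+x)/2)^200 := one_mul _

/-- Key log inequality: for `0 < x ≤ 77/200`, `77 log x ≤ 200 log ((1+x)/2)`. -/
lemma aux_key_log (x : ℝ) (hx0 : 0 < x) (hx1 : x ≤ 77/200) :
    77 * Real.log x ≤ 200 * Real.log ((1+x)/2) := by
  have h := Real.log_le_log (by positivity) (aux_key_poly x hx0 hx1)
  rw [Real.log_pow, Real.log_pow] at h
  push_cast at h
  linarith

/-- Let `R = 0.77`. For every `0 < α ≤ 0.6442`, with `x ∈ (0,1)` the unique solution of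
`(x - 1)/ln x = α` and `y ∈ (0,1)` the unique solution of `(y - 1)/ln y = α/R`, the
naive-WOM erasure factor is no larger than the baseline one:
`1/(2(1 - y)) ≤ 1/(1 - x)`, equivalently `1 - x ≤ 2(1 - y)`. -/
theorem naiveWOM_beats_baseline :
    ∀ α x y : ℝ, 0 < α → α ≤ 0.6442 →
      x ∈ Set.Ioo (0:ℝ) 1 → y ∈ Set.Ioo (0:ℝ) 1 →
      (x - 1) / Real.log x = α → (y - 1) / Real.log y = α / 0.77 →
      1 / (2 * (1 - y)) ≤ 1 / (1 - x) ∧ 1 - x ≤ 2 * (1 - y) := by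
  intro α x y hα0 hα1 hx hy hfx hfy
  obtain ⟨hx0, hx1⟩ := hx
  obtain ⟨hy0, hy1⟩ := hy
  have hxs : (77/200:ℝ) ∈ Set.Ioo (0:ℝ) 1 := by norm_num
  -- f(77/200) ≥ 0.6442
  have hlogs : Real.log (77/200:ℝ) < 0 := Real.log_neg (by norm_num) (by norm_num)
  have hfs : (0.6442:ℝ) ≤ ((77/200:ℝ) - 1) / Real.log (77/200) := by
    have h1 := aux_log_xstar
    rw [show ((77:ℝ)/200 - 1) = -(123/200) by norm_num,
      show Real.log ((77:ℝ)/200) = -(-Real.log (77/200)) by ring, neg_div_neg_eq]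
    have hpos : 0 < -Real.log ((77:ℝ)/200) := by linarith
    rw [show (0.6442:ℝ) = (123/200) / (3075/3221) by norm_num]
    gcongr
    linarith
  -- x ≤ 77/200
  have hxle : x ≤ 77/200 := by
    have hfle : (x - 1) / Real.log x ≤ ((77/200:ℝ) - 1) / Real.log (77/200) := by
      rw [hfx]; linarith
    exact (aux_f_strictMono.le_iff_le ⟨hx0, hx1⟩ hxs).mp hfle
  -- midpoint
  set m : ℝ := (1+x)/2 with hmdef
  have hm : m ∈ Set.Ioo (0:ℝ) 1 := ⟨by positivity, by rw [hmdef]; linarith⟩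
  have hlogx : Real.log x < 0 := Real.log_neg hx0 hx1
  have hlogm : Real.log m < 0 := Real.log_neg hm.1 hm.2
  set a : ℝ := -Real.log x with hadef
  set b : ℝ := -Real.log m with hbdef
  have ha : 0 < a := by simp [hadef]; linarith
  have hb : 0 < b := by simp [hbdef]; linarith
  have hkey : 2*b ≤ (77/100) * a := by
    have := aux_key_log x hx0 hxle
    rw [hadef, hbdef]; rw [hmdef] at *; linarith
  -- f y ≤ f m
  have efm : (m - 1) / Real.log m = (1-x) / (2*b) := by
    have hbne : Real.log m = -b := by rw [hbdef]; ring
    rw [hbne, hmdef]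
    rw [div_eq_div_iff (by rw [hbdef] at hb ⊢; linarith) (by linarith)]
    ring
  have efx : (x - 1) / Real.log x = (1-x) / a := by
    have hane : Real.log x = -a := by rw [hadef]; ring
    rw [hane, div_eq_div_iff (by linarith) (by linarith)]
    ring
  have h6 : (y - 1) / Real.log y ≤ (m - 1) / Real.log m := by
    rw [hfy, efm, ← hfx, efx, show (0.77:ℝ) = 77/100 by norm_num, div_div]
    rw [div_le_div_iff₀ (by positivity) (by positivity)]
    have h7 : (0:ℝ) ≤ 1 - x := by linarith
    nlinarith [mul_le_mul_of_nonneg_left hkey h7]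
  have hym : y ≤ m := (aux_f_strictMono.le_iff_le ⟨hy0, hy1⟩ hm).mp h6
  have hmain : 1 - x ≤ 2 * (1 - y) := by rw [hmdef] at hym; linarith
  refine ⟨?_, hmain⟩
  apply one_div_le_one_div_of_le (by linarith) hmain
end

section
/- Let R = 0.77. For every α with 0.645 ≤ α < 0.77, let x ∈ (0,1) be the unique solution of (x - 1)/ln x = α and let y ∈ (0,1) be the unique solution of (y - 1)/ln y = α/R. Then 1/(2(1 - y)) > 1/(1 - x), i.e., the naive-WOM system has a strictly worse (larger) erasure factor than the baseline system. -/
/-!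
Put `f s = (s - 1) / log s`. Chord slopes of the concave `log` towards `1` decrease, so `f` is
strictly increasing on `(0, 1)`. Hence `f 0.3856 < 0.645 ≤ α` gives `x > 0.3856`, and the claim
`y > (1 + x) / 2` amounts to `f ((1 + x) / 2) < α / 0.77`. As `(1 + x) / 2 - 1 = α log x / 2`,
this reduces to `(1 + x) / 2 < x ^ 0.385`, which holds at `x = 0.3856` and with equality at
`x = 1`, hence on `[0.3856, 1)` by concavity of `s ↦ s ^ 0.385`.
-/

open Real Set

theorem ConcaveOn.secant_mono {s : Set ℝ} {g : ℝ → ℝ} (hg : ConcaveOn ℝ s g) {a x y : ℝ}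
    (ha : a ∈ s) (hx : x ∈ s) (hy : y ∈ s) (hxa : x ≠ a) (hya : y ≠ a) (hxy : x ≤ y) :
    (g y - g a) / (y - a) ≤ (g x - g a) / (x - a) := by
  have key := hg.neg.secant_mono ha hx hy hxa hya hxy
  simp only [Pi.neg_apply] at key
  linear_combination key

theorem strictMonoOn_sub_one_div_log : StrictMonoOn (fun s => (s - 1) / log s) (Ioo 0 1) := by
  intro s ⟨hs0, hs1⟩ u ⟨hu0, hu1⟩ hsu
  have hslope : log u / (u - 1) < log s / (s - 1) := by
    simpa using strictConcaveOn_log_Ioi.secant_strict_mono (a := 1) (mem_Ioi.2 one_pos) hs0 hu0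
      hs1.ne hu1.ne hsu
  have hpos : 0 < log u / (u - 1) := div_pos_of_neg_of_neg (log_neg hu0 hu1) (by linarith)
  simpa only [inv_div, one_div] using one_div_lt_one_div_of_lt hpos hslope

theorem one_add_div_two_lt_rpow {p c x : ℝ} (hp₀ : 0 ≤ p) (hp₁ : p ≤ 1) (hc : 0 ≤ c)
    (hcx : c ≤ x) (hx : x < 1) (hcp : (1 + c) / 2 < c ^ p) : (1 + x) / 2 < x ^ p := by
  have hslope : (x ^ p - 1) / (x - 1) ≤ (c ^ p - 1) / (c - 1) := by
    simpa using (concaveOn_rpow hp₀ hp₁).secant_mono (a := 1) (mem_Ici.2 zero_le_one) hc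
      (mem_Ici.2 (hc.trans hcx)) (by linarith) hx.ne hcx
  have hc_slope : (c ^ p - 1) / (c - 1) < 1 / 2 := by
    rw [div_lt_iff_of_neg (by linarith)]; linarith
  have hx_slope := hslope.trans_lt hc_slope
  rw [div_lt_iff_of_neg (by linarith)] at hx_slope
  linarith

-- `81 / 85` is the simplest fraction with `log 0.3856 < -81/85` and `0.645 * (81/85) > 0.6144`.
theorem log_lt_neg_81_div_85 : log 0.3856 < -(81 / 85) := by
  have hc : (0:ℝ) < 0.3856 := by norm_num
  rw [log_lt_iff_lt_exp hc, exp_neg, lt_inv_comm₀ hc (exp_pos _)]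
  have hpow : exp (81 / 85) ^ 85 < (0.3856⁻¹ : ℝ) ^ 85 := by
    rw [← exp_nat_mul, show ((85 : ℕ) : ℝ) * (81 / 85) = (81 : ℕ) by norm_num, ← exp_one_pow]
    calc exp 1 ^ 81 < (2.7182818286 : ℝ) ^ 81 :=
          pow_lt_pow_left₀ exp_one_lt_d9 (exp_pos 1).le (by norm_num)
      _ < (0.3856⁻¹ : ℝ) ^ 85 := by norm_num
  exact lt_of_pow_lt_pow_left₀ 85 (by norm_num) hpow

theorem one_add_div_two_lt_rpow_at_0_3856 : (1 + 0.3856) / 2 < (0.3856 : ℝ) ^ (0.385 : ℝ) := by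
  have hpow : ((1 + 0.3856) / 2 : ℝ) ^ 200 < ((0.3856 : ℝ) ^ (0.385 : ℝ)) ^ 200 := by
    rw [← rpow_natCast ((0.3856 : ℝ) ^ (0.385 : ℝ)), ← rpow_mul (by norm_num),
      show (0.385 : ℝ) * (200 : ℕ) = (77 : ℕ) by norm_num, rpow_natCast]
    norm_num
  exact lt_of_pow_lt_pow_left₀ 200 (by positivity) hpow

/-- Let `R = 0.77`. For every `0.645 ≤ α < 0.77`, with `x ∈ (0,1)` the unique solution of
`(x - 1)/ln x = α` and `y ∈ (0,1)` the unique solution of `(y - 1)/ln y = α/R`, the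
naive-WOM erasure factor is strictly worse: `1/(2(1 - y)) > 1/(1 - x)`. -/
theorem naiveWOM_worse_than_baseline :
    ∀ α x y : ℝ, 0.645 ≤ α → α < 0.77 →
      x ∈ Set.Ioo (0:ℝ) 1 → y ∈ Set.Ioo (0:ℝ) 1 →
      (x - 1) / Real.log x = α → (y - 1) / Real.log y = α / 0.77 →
      1 / (2 * (1 - y)) > 1 / (1 - x) := by
  intro α x y hα _ hx hy hfx hfy
  have hcx : 0.3856 < x := by
    refine (strictMonoOn_sub_one_div_log.lt_iff_lt ⟨by norm_num, by norm_num⟩ hx).1 ?_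
    have hlog := log_lt_neg_81_div_85
    rw [hfx, div_lt_iff_of_neg (by linarith)]
    nlinarith
  have hlog : log ((1 + x) / 2) < 0.385 * log x := by
    rw [← log_rpow hx.1]
    exact log_lt_log (by linarith [hx.1]) <| one_add_div_two_lt_rpow (by norm_num) (by norm_num)
      (by norm_num) hcx.le hx.2 one_add_div_two_lt_rpow_at_0_3856
  have hx_eq : x - 1 = α * log x := by rw [← hfx, div_mul_cancel₀ _ (log_neg hx.1 hx.2).ne]
  have ht : (1 + x) / 2 ∈ Ioo 0 1 := ⟨by linarith [hx.1], by linarith [hx.2]⟩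
  have hty : (1 + x) / 2 < y := by
    refine (strictMonoOn_sub_one_div_log.lt_iff_lt ht hy).1 ?_
    show ((1 + x) / 2 - 1) / log ((1 + x) / 2) < (y - 1) / log y
    rw [hfy, div_lt_iff_of_neg (log_neg ht.1 ht.2)]
    calc α / 0.77 * log ((1 + x) / 2) < α / 0.77 * (0.385 * log x) :=
          mul_lt_mul_of_pos_left hlog (div_pos (by linarith) (by norm_num))
      _ = (1 + x) / 2 - 1 := by linear_combination (-1 / 2 : ℝ) * hx_eq
  exact one_div_lt_one_div_of_lt (by linarith [hy.2]) (by linarith)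
end

section
/- Let R = 0.77, and for α ∈ (0, R) let x(α), y(α) ∈ (0,1) denote the unique solutions of (x - 1)/ln x = α and (y - 1)/ln y = α/R respectively. Then there exists α* ∈ [0.6442, 0.645] such that 1 - x(α*) = 2(1 - y(α*)), i.e., the erasure factors of the baseline and naive-WOM systems coincide at α*. -/
/-!
Parametrise by the naive-WOM solution `y = t`: the condition `1 - x = 2 (1 - y)` says
`x = 2t - 1`, so we need `f (2t - 1) = 0.77 f t`. Writing `f u = (u - 1) / log u`, this holds
as soon as `200 log t = 77 log (2t - 1)`, i.e. `t ^ 200 = (2t - 1) ^ 77`, which has a root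
`t ∈ [0.6923, 0.6929]` by the intermediate value theorem. Since `f` is strictly increasing on
`(0, 1)` (the secant slopes of the concave `log` through `1` decrease), it is injective there,
which identifies `x α` and `y α` for `α = 0.77 f t`, and bounds `α` by its values at the
endpoints of the interval.
-/

open Real Set

/-- The logarithmic mean of `t` and `1`. -/
noncomputable def logMean (t : ℝ) : ℝ := (t - 1) / log t

theorem logMean_strictMonoOn : StrictMonoOn logMean (Ioo 0 1) := by
  intro a ha b hb hab
  have slope_anti : log b / (b - 1) < log a / (a - 1) := by
    simpa using strictConcaveOn_log_Ioi.secant_strict_mono (a := 1) (mem_Ioi.2 one_pos)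
      ha.1 hb.1 ha.2.ne hb.2.ne hab
  have slope_pos : 0 < log b / (b - 1) :=
    div_pos_of_neg_of_neg (log_neg hb.1 hb.2) (by linarith [hb.2])
  simpa only [logMean, one_div_div] using one_div_lt_one_div_of_lt slope_pos slope_anti

theorem logMean_two_mul_sub_one {t c : ℝ} (ht : log t ≠ 0) (h : log t = c * log (2 * t - 1)) :
    logMean (2 * t - 1) = 2 * c * logMean t := by
  have hc : c ≠ 0 := by rintro rfl; simp_all
  have hlog : log (2 * t - 1) ≠ 0 := by rintro h'; simp_all
  rw [logMean, logMean, h]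
  field_simp
  ring

theorem exists_log_eq_mul_log_two_mul_sub_one :
    ∃ t ∈ Icc (0.6923 : ℝ) 0.6929, log t = 0.385 * log (2 * t - 1) := by
  have hcont : ContinuousOn (fun t : ℝ => t ^ 200 - (2 * t - 1) ^ 77) (Icc 0.6923 0.6929) := by
    fun_prop
  obtain ⟨t, ht, hzero⟩ := intermediate_value_Icc' (by norm_num) hcont
    (show (0 : ℝ) ∈ Icc _ _ by norm_num)
  have hlog := congrArg log (sub_eq_zero.mp hzero)
  rw [log_pow, log_pow] at hlog
  push_cast at hlog
  exact ⟨t, ht, by linarith⟩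

/- The two bounds below use `log 2` to nine digits and `log u ≈ u - 1` at
`u = a ^ 17 * 2 ^ 9 ≈ 1`. -/
theorem neg_lt_log_zero_point_six_nine_two_three : (-0.367745 : ℝ) < log 0.6923 := by
  have hsplit : log ((0.6923 : ℝ) ^ 17 * 2 ^ 9) = 17 * log 0.6923 + 9 * log 2 := by
    rw [log_mul (by positivity) (by positivity), log_pow, log_pow]
    push_cast
    ring
  have hlow := one_sub_inv_le_log_of_pos (x := (0.6923 : ℝ) ^ 17 * 2 ^ 9) (by positivity)
  have hnum : (1 : ℝ) - ((0.6923 : ℝ) ^ 17 * 2 ^ 9)⁻¹ > 17 * (-0.367745) + 9 * 0.6931471808 := by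
    norm_num
  linarith [log_two_lt_d9]

theorem log_zero_point_six_nine_two_nine_lt : log 0.6929 < (-0.3668 : ℝ) := by
  have hsplit : log ((0.6929 : ℝ) ^ 17 * 2 ^ 9) = 17 * log 0.6929 + 9 * log 2 := by
    rw [log_mul (by positivity) (by positivity), log_pow, log_pow]
    push_cast
    ring
  have hup := log_le_sub_one_of_pos (x := (0.6929 : ℝ) ^ 17 * 2 ^ 9) (by positivity)
  have hnum : (0.6929 : ℝ) ^ 17 * 2 ^ 9 - 1 < 17 * (-0.3668) + 9 * 0.6931471803 := by
    norm_num
  linarith [log_two_gt_d9]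

theorem le_mul_logMean_zero_point_six_nine_two_three : (0.6442 : ℝ) ≤ 0.77 * logMean 0.6923 := by
  have hlog : log 0.6923 < 0 := log_neg (by norm_num) (by norm_num)
  rw [logMean, ← neg_div_neg_eq, mul_div_assoc', le_div_iff₀ (by linarith)]
  linarith [neg_lt_log_zero_point_six_nine_two_three]

theorem mul_logMean_zero_point_six_nine_two_nine_le : 0.77 * logMean 0.6929 ≤ (0.645 : ℝ) := by
  have hlog : log 0.6929 < 0 := log_neg (by norm_num) (by norm_num)
  rw [logMean, ← neg_div_neg_eq, mul_div_assoc', div_le_iff₀ (by linarith)]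
  linarith [log_zero_point_six_nine_two_nine_lt]

/-- Let `R = 0.77`, and for `α ∈ (0, R)` let `x α, y α ∈ (0,1)` denote the unique solutions
of `(x - 1)/ln x = α` and `(y - 1)/ln y = α/R` respectively. Then there exists
`α* ∈ [0.6442, 0.645]` with `1 - x α* = 2 (1 - y α*)`, i.e. the erasure factors of the
baseline and naive-WOM systems coincide at `α*`. -/
theorem naiveWOM_baseline_crossover (x y : ℝ → ℝ)
    (hx : ∀ α ∈ Set.Ioo (0:ℝ) 0.77,
      x α ∈ Set.Ioo (0:ℝ) 1 ∧ (x α - 1) / Real.log (x α) = α)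
    (hy : ∀ α ∈ Set.Ioo (0:ℝ) 0.77,
      y α ∈ Set.Ioo (0:ℝ) 1 ∧ (y α - 1) / Real.log (y α) = α / 0.77) :
    ∃ α ∈ Set.Icc (0.6442:ℝ) 0.645, 1 - x α = 2 * (1 - y α) := by
  obtain ⟨t, ⟨ht₁, ht₂⟩, hlog⟩ := exists_log_eq_mul_log_two_mul_sub_one
  have htI : t ∈ Ioo (0 : ℝ) 1 := ⟨by linarith, by linarith⟩
  have hsI : 2 * t - 1 ∈ Ioo (0 : ℝ) 1 := ⟨by linarith, by linarith⟩
  have hlow : logMean 0.6923 ≤ logMean t :=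
    logMean_strictMonoOn.monotoneOn ⟨by norm_num, by norm_num⟩ htI ht₁
  have hup : logMean t ≤ logMean 0.6929 :=
    logMean_strictMonoOn.monotoneOn htI ⟨by norm_num, by norm_num⟩ ht₂
  set α := 0.77 * logMean t with hαdef
  have hα : α ∈ Icc (0.6442 : ℝ) 0.645 :=
    ⟨by linarith [le_mul_logMean_zero_point_six_nine_two_three],
      by linarith [mul_logMean_zero_point_six_nine_two_nine_le]⟩
  have hαI : α ∈ Ioo (0 : ℝ) 0.77 := ⟨by linarith [hα.1], by linarith [hα.2]⟩
  have hxα : x α = 2 * t - 1 := logMean_strictMonoOn.injOn (hx α hαI).1 hsI <| by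
    rw [logMean_two_mul_sub_one (log_neg htI.1 htI.2).ne hlog]
    exact (hx α hαI).2.trans (by norm_num [hαdef])
  have hyα : y α = t := logMean_strictMonoOn.injOn (hy α hαI).1 htI <|
    (hy α hαI).2.trans (mul_div_cancel_left₀ _ (by norm_num))
  exact ⟨α, hα, by rw [hxα, hyα]; ring⟩
end

section
/- For every α ∈ (0,1), let x ∈ (0,1) be the unique solution of (x - 1)/ln x = α. Then there exist γ₁ ∈ (0,1) and γ₂ ∈ (0, (1 + γ₁)/2) such that α = (3/2 - γ₁/2 - γ₂)/ln((1 + γ₁)/(2·γ₁·γ₂)) and 1/(3/2 - γ₁/2 - γ₂) < 1/(1 - x). In other words, for every storage rate the CP-WOM system achieves a strictly smaller erasure factor than the baseline system. -/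
/-!
Take `γ₁ = (1 + x)/2` and write `c = (1 + γ₁)/(2γ₁)`, so that the CP-WOM relation reads
`3/2 - γ₁/2 - γ₂ = α (log c - log γ₂)`. The baseline relation says `α (-log x) = 1 - x`, hence at
`γ₂ = x c` the left side exceeds the right one by `(1 - γ₁)(γ₁ - x)/(2γ₁) > 0`, while the right
side tends to `+∞` as `γ₂ → 0`. The intermediate value theorem gives a root `γ₂ < x c`, and there
`3/2 - γ₁/2 - γ₂ = α (log c - log γ₂) > α (-log x) = 1 - x`.
-/

open Real Set

lemma exists_mem_Ioo_sub_eq_mul_sub_log {α K L b : ℝ} (hα : 0 < α) (hb : 0 < b)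
    (h : α * (L - log b) < K - b) : ∃ t ∈ Ioo 0 b, K - t = α * (L - log t) := by
  set f : ℝ → ℝ := fun t ↦ K - t - α * (L - log t)
  -- At `a` the logarithmic term equals `K`, so `f a = -a`.
  set a := exp (L - K / α)
  have ha : 0 < a := exp_pos _
  have hfa : f a < 0 := by
    have : α * (L - log a) = K := by rw [log_exp]; field_simp; ring
    simp only [f, this]
    linarith
  have hab : a < b := by
    by_contra! hba
    have : log b ≤ L - K / α := by simpa [a] using log_le_log hb hba
    have : K ≤ α * (L - log b) := (div_le_iff₀' hα).1 (by linarith)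
    linarith
  have hf : ContinuousOn f (Icc a b) := by
    refine ContinuousOn.sub (by fun_prop) (continuousOn_const.mul (continuousOn_const.sub ?_))
    exact continuousOn_log.mono fun t ht ↦ (ha.trans_le ht.1).ne'
  obtain ⟨t, ⟨hat, htb⟩, hft⟩ :=
    intermediate_value_Ioo hab.le hf ⟨hfa, by simp only [f]; linarith⟩
  exact ⟨t, ⟨ha.trans hat, htb⟩, by simp only [f] at hft; linarith⟩

lemma one_sub_lt_three_div_two_sub_div_two_sub_mul {x g : ℝ} (hx : 0 < x) (hxg : x < g)
    (hg : g < 1) :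
    1 - x < 3 / 2 - g / 2 - x * ((1 + g) / (2 * g)) := by
  have hg0 : 0 < g := hx.trans hxg
  have : 3 / 2 - g / 2 - x * ((1 + g) / (2 * g)) - (1 - x) = (1 - g) * (g - x) / (2 * g) := by
    field_simp; ring
  have : 0 < (1 - g) * (g - x) / (2 * g) :=
    div_pos (mul_pos (by linarith) (by linarith)) (by linarith)
  linarith

/-- For every `α ∈ (0,1)`, with `x ∈ (0,1)` the unique solution of `(x - 1)/ln x = α`,
there exist `γ₁ ∈ (0,1)` and `γ₂ ∈ (0, (1 + γ₁)/2)` with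
`α = (3/2 - γ₁/2 - γ₂)/ln((1 + γ₁)/(2 γ₁ γ₂))` and
`1/(3/2 - γ₁/2 - γ₂) < 1/(1 - x)`: the CP-WOM system achieves a strictly smaller
erasure factor than the baseline system. -/
theorem cpWOM_beats_baseline :
    ∀ α ∈ Set.Ioo (0:ℝ) 1, ∀ x ∈ Set.Ioo (0:ℝ) 1,
      (x - 1) / Real.log x = α →
      ∃ γ₁ ∈ Set.Ioo (0:ℝ) 1, ∃ γ₂ ∈ Set.Ioo (0:ℝ) ((1 + γ₁) / 2),
        α = (3/2 - γ₁/2 - γ₂) / Real.log ((1 + γ₁) / (2 * γ₁ * γ₂)) ∧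
        1 / (3/2 - γ₁/2 - γ₂) < 1 / (1 - x) := by
  rintro α ⟨hα, -⟩ x ⟨hx0, hx1⟩ hαx
  have hbase : α * -log x = 1 - x := by
    rw [← hαx, mul_neg, div_mul_cancel₀ _ (log_neg hx0 hx1).ne]
    ring
  have hxg : x < (1 + x) / 2 := by linarith
  have hg1 : (1 + x) / 2 < 1 := by linarith
  set g := (1 + x) / 2
  set c := (1 + g) / (2 * g)
  have hc : 0 < c := by positivity
  have hlog_xc : log (x * c) = log x + log c := log_mul hx0.ne' hc.ne'
  have hxc : x * c < (1 + g) / 2 := by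
    calc x * c < g * c := by gcongr
      _ = (1 + g) / 2 := by simp only [c]; field_simp [(hx0.trans hxg).ne']
  obtain ⟨t, ⟨ht, htxc⟩, hroot⟩ :
      ∃ t ∈ Ioo 0 (x * c), 3 / 2 - g / 2 - t = α * (log c - log t) := by
    refine exists_mem_Ioo_sub_eq_mul_sub_log hα (by positivity) ?_
    rw [hlog_xc, show log c - (log x + log c) = -log x by ring, hbase]
    exact one_sub_lt_three_div_two_sub_div_two_sub_mul hx0 hxg hg1
  have hgap : -log x < log c - log t := by
    linarith [log_lt_log ht htxc]
  have herasure : 1 - x < 3 / 2 - g / 2 - t := by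
    rw [hroot, ← hbase]
    exact mul_lt_mul_of_pos_left hgap hα
  refine ⟨g, ⟨by positivity, hg1⟩, t, ⟨ht, htxc.trans hxc⟩, ?_,
    one_div_lt_one_div_of_lt (by linarith) herasure⟩
  rw [div_mul_eq_div_div, log_div hc.ne' ht.ne', hroot,
    mul_div_cancel_right₀ _ (by linarith [log_neg hx0 hx1] : log c - log t ≠ 0)]
end

section
/- Fix R ∈ (0,1). There exists α₀ > 0 such that for every α ∈ (0, α₀): letting y ∈ (0,1) be the unique solution of (y - 1)/ln y = α/R, and for every γ₁ ∈ [0,1] and γ₂ ≥ 0 with 3/2 - γ₁/2 - γ₂ > 0, one has 1/(2(1 - y)) < 1/(3/2 - γ₁/2 - γ₂). (For sufficiently small storage rates, the naive-WOM erasure factor, which approaches 1/2, is strictly smaller than the CP-WOM erasure factor, which is always at least 2/3.) -/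
/-- Fix `R ∈ (0,1)`. There exists `α₀ > 0` such that for every `α ∈ (0, α₀)`: letting
`y ∈ (0,1)` be the unique solution of `(y - 1)/ln y = α/R`, and for every `γ₁ ∈ [0,1]`
and `γ₂ ≥ 0` with `3/2 - γ₁/2 - γ₂ > 0`, one has
`1/(2(1 - y)) < 1/(3/2 - γ₁/2 - γ₂)`. -/
theorem naiveWOM_beats_cpWOM_small_alpha (R : ℝ) (hR : R ∈ Set.Ioo (0:ℝ) 1) :
    ∃ α₀ > (0:ℝ), ∀ α ∈ Set.Ioo (0:ℝ) α₀, ∀ y ∈ Set.Ioo (0:ℝ) 1,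
      (y - 1) / Real.log y = α / R →
      ∀ γ₁ ∈ Set.Icc (0:ℝ) 1, ∀ γ₂ : ℝ, 0 ≤ γ₂ → 0 < 3/2 - γ₁/2 - γ₂ →
        1 / (2 * (1 - y)) < 1 / (3/2 - γ₁/2 - γ₂) := by
  obtain ⟨hR0, hR1⟩ := hR
  refine ⟨R / 4, by positivity, ?_⟩
  rintro α ⟨hα0, hα⟩ y ⟨hy0, hy1⟩ heq γ₁ ⟨hγ10, hγ11⟩ γ₂ hγ20 hden
  -- log(1/y) ≤ 1/y - 1, hence y ≤ (y-1)/log y = α/R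
  have hlogy : Real.log y < 0 := Real.log_neg hy0 hy1
  have hlog_inv : Real.log (1/y) ≤ 1/y - 1 :=
    Real.log_le_sub_one_of_pos (by positivity)
  have hlog_inv_pos : 0 < Real.log (1/y) := by
    rw [Real.log_div one_ne_zero (ne_of_gt hy0), Real.log_one]
    linarith
  have hkey : y ≤ (y - 1) / Real.log y := by
    have h1 : (y - 1) / Real.log y = (1 - y) / Real.log (1/y) := by
      rw [Real.log_div one_ne_zero (ne_of_gt hy0), Real.log_one]
      rw [div_eq_div_iff (ne_of_lt hlogy) (by linarith)]
      ring
    rw [h1, le_div_iff₀ hlog_inv_pos]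
    have h2 : 1/y - 1 = (1 - y)/y := by field_simp
    calc y * Real.log (1/y) ≤ y * (1/y - 1) :=
          mul_le_mul_of_nonneg_left hlog_inv (le_of_lt hy0)
      _ = 1 - y := by field_simp
  have hyα : y ≤ α / R := heq ▸ hkey
  have hy4 : y < 1/4 := by
    have h1 : α / R < (R/4) / R := by
      apply div_lt_div_of_pos_right hα hR0
    have h4 : (R/4)/R = 1/4 := by field_simp
    linarith
  have hLHS : 1 / (2 * (1 - y)) < 2/3 := by
    rw [div_lt_div_iff₀ (by linarith) (by norm_num)]
    linarith
  have hRHS : (2:ℝ)/3 ≤ 1 / (3/2 - γ₁/2 - γ₂) := by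
    rw [div_le_div_iff₀ (by norm_num) hden]
    linarith
  linarith
end
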